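/- If A and B are critical independent sets of a graph G, then A ∪ (B − N[A]) and B ∪ (A − N[B]) are critical independent sets of G of equal cardinality. -/

import Mathlib

open Finset

variable {V : Type*}

namespace CrownPaper

variable [Fintype V] [DecidableEq V]

/-- The (open) neighborhood of a finite set of vertices. -/
def nbrs (G : SimpleGraph V) [DecidableRel G.Adj] (A : Finset V) : Finset V :=
  univ.filter (fun v => ∃ a ∈ A, G.Adj v a)

/-- The closed neighborhood `N[A] = A ∪ N(A)`. -/
def closedNbrs (G : SimpleGraph V) [DecidableRel G.Adj] (A : Finset V) : Finset V :=
  A ∪ nbrs G A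

/-- `S` is an independent set of `G`. -/
def IsIndep (G : SimpleGraph V) (S : Finset V) : Prop :=
  ∀ a ∈ S, ∀ b ∈ S, ¬ G.Adj a b

/-- The difference `d(S) = |S| - |N(S)|`. -/
def diff (G : SimpleGraph V) [DecidableRel G.Adj] (S : Finset V) : ℤ :=
  (S.card : ℤ) - ((nbrs G S).card : ℤ)

/-- `S` is a critical independent set. -/
def IsCritIndep (G : SimpleGraph V) [DecidableRel G.Adj] (S : Finset V) : Prop :=
  IsIndep G S ∧ ∀ I : Finset V, IsIndep G I → diff G I ≤ diff G S

/-- `S` is a crown: an independent set with a matching from `N(S)` into `S`. -/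
def IsCrown (G : SimpleGraph V) [DecidableRel G.Adj] (S : Finset V) : Prop :=
  IsIndep G S ∧ ∃ f : V → V, (∀ v ∈ nbrs G S, f v ∈ S ∧ G.Adj v (f v)) ∧
    Set.InjOn f (nbrs G S : Set V)

/-- `S` is a local maximum independent set: a maximum independent set of `G[N[S]]`. -/
def IsLocalMaxIndep (G : SimpleGraph V) [DecidableRel G.Adj] (S : Finset V) : Prop :=
  IsIndep G S ∧ ∀ I : Finset V, IsIndep G I → I ⊆ closedNbrs G S → I.card ≤ S.card

/-- The independence number. -/
noncomputable def alpha (G : SimpleGraph V) : ℕ :=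
  sSup {n | ∃ S : Finset V, IsIndep G S ∧ S.card = n}

/-- `M` is a matching of `G`, given as a finite set of (ordered) edges. -/
def IsMatching (G : SimpleGraph V) (M : Finset (V × V)) : Prop :=
  (∀ e ∈ M, G.Adj e.1 e.2) ∧
  ∀ e ∈ M, ∀ e' ∈ M, e ≠ e' →
    e.1 ≠ e'.1 ∧ e.1 ≠ e'.2 ∧ e.2 ≠ e'.1 ∧ e.2 ≠ e'.2

/-- The matching number. -/
noncomputable def mu (G : SimpleGraph V) : ℕ :=
  sSup {n | ∃ M : Finset (V × V), IsMatching G M ∧ M.card = n}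

/-- `G` has a perfect matching. -/
def HasPerfectMatching (G : SimpleGraph V) : Prop :=
  ∃ M : Finset (V × V), IsMatching G M ∧ ∀ v : V, ∃ e ∈ M, v = e.1 ∨ v = e.2

/-- `G` is a König–Egerváry graph: `α(G) + μ(G) = |V(G)|`. -/
def IsKonigEgervary (G : SimpleGraph V) : Prop :=
  alpha G + mu G = Fintype.card V

/-- `G` is bipartite. -/
def IsBipartite (G : SimpleGraph V) : Prop :=
  ∃ X : Set V, ∀ a b : V, G.Adj a b → (a ∈ X ↔ b ∉ X)

end CrownPaper

open CrownPaper

/-! The key fact is Hall's condition for matching `N(A)` into `A` when `A` is critical: removing from `A`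
the neighbours of some `S ⊆ N(A)` loses `|A ∩ N(S)|` vertices and at least `|S|` neighbours, so
criticality forces `|S| ≤ |A ∩ N(S)|`. With `X = A ∪ (B \ N[A])` and `D = B ∩ N(A)`, the set
`A ∪ B` is the disjoint union of `X` and `D`, and the neighbours of `D` in `A` lie outside `N(X)`;
Hall's condition then gives `d(A ∪ B) ≤ d(X)`. Supermodularity of `d` and criticality of `B`
give `d(A) ≤ d(A ∪ B)`, so `X` is critical. Finally `|X| = |A| + |B| - |A ∩ B| - |B ∩ N(A)|`,
and Hall's condition for `S = B ∩ N(A)`, used for `A` and for `B`, gives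
`|B ∩ N(A)| = |A ∩ N(B)|`. -/

namespace CrownPaper

theorem IsIndep.mono {G : SimpleGraph V} {A B : Finset V} (hB : IsIndep G B) (h : A ⊆ B) :
    IsIndep G A :=
  fun a ha b hb => hB a (h ha) b (h hb)

variable [Fintype V] {G : SimpleGraph V} [DecidableRel G.Adj] {A B S : Finset V}

@[simp]
theorem mem_nbrs {v : V} : v ∈ nbrs G A ↔ ∃ a ∈ A, G.Adj v a := by
  simp [nbrs]

theorem nbrs_mono (h : A ⊆ B) : nbrs G A ⊆ nbrs G B := by
  intro v
  simp only [mem_nbrs]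
  exact fun ⟨a, ha, hva⟩ => ⟨a, h ha, hva⟩

theorem IsIndep.disjoint_nbrs (hA : IsIndep G A) : Disjoint A (nbrs G A) :=
  disjoint_left.2 fun v hv hvN => by
    obtain ⟨a, ha, hva⟩ := mem_nbrs.1 hvN
    exact hA v hv a ha hva

variable [DecidableEq V]

theorem nbrs_union (A B : Finset V) : nbrs G (A ∪ B) = nbrs G A ∪ nbrs G B := by
  ext v
  simp only [mem_nbrs, mem_union, or_and_right, exists_or]

theorem diff_add_diff_le_diff_union_add_diff_inter (A B : Finset V) :
    diff G A + diff G B ≤ diff G (A ∪ B) + diff G (A ∩ B) := by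
  have hcard := card_union_add_card_inter A B
  have hN : #(nbrs G (A ∪ B)) + #(nbrs G (A ∩ B)) ≤ #(nbrs G A) + #(nbrs G B) :=
    calc #(nbrs G (A ∪ B)) + #(nbrs G (A ∩ B))
        ≤ #(nbrs G A ∪ nbrs G B) + #(nbrs G A ∩ nbrs G B) := by
          rw [nbrs_union]
          gcongr
          exact subset_inter (nbrs_mono inter_subset_left) (nbrs_mono inter_subset_right)
      _ = #(nbrs G A) + #(nbrs G B) := card_union_add_card_inter _ _
  simp only [diff]
  omega

theorem IsCritIndep.card_le_card_inter_nbrs (hA : IsCritIndep G A) (hS : S ⊆ nbrs G A) :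
    #S ≤ #(A ∩ nbrs G S) := by
  have hN : nbrs G (A \ nbrs G S) ⊆ nbrs G A \ S := by
    intro v hv
    obtain ⟨a, ha, hva⟩ := mem_nbrs.1 hv
    refine mem_sdiff.2 ⟨nbrs_mono sdiff_subset hv, fun hvS => (mem_sdiff.1 ha).2 ?_⟩
    exact mem_nbrs.2 ⟨v, hvS, hva.symm⟩
  have hle := hA.2 (A \ nbrs G S) (hA.1.mono sdiff_subset)
  have hcardN := card_le_card hN
  rw [card_sdiff_of_subset hS] at hcardN
  have hcardA : #(A \ nbrs G S) = #A - #(A ∩ nbrs G S) := by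
    rw [card_sdiff, inter_comm]
  have := card_le_card (inter_subset_left : A ∩ nbrs G S ⊆ A)
  have := card_le_card hS
  simp only [diff] at hle
  omega

theorem IsIndep.disjoint_nbrs_union_sdiff_closedNbrs (hA : IsIndep G A) :
    Disjoint A (nbrs G (A ∪ (B \ closedNbrs G A))) := by
  refine disjoint_left.2 fun v hv hvN => ?_
  obtain ⟨x, hx, hvx⟩ := mem_nbrs.1 hvN
  rcases mem_union.1 hx with hxA | hxB
  · exact hA v hv x hxA hvx
  · exact (mem_sdiff.1 hxB).2 (mem_union_right _ (mem_nbrs.2 ⟨v, hv, hvx.symm⟩))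

theorem IsIndep.union_sdiff_closedNbrs (hA : IsIndep G A) (hB : IsIndep G B) :
    IsIndep G (A ∪ (B \ closedNbrs G A)) := by
  have hdisj := hA.disjoint_nbrs_union_sdiff_closedNbrs (B := B)
  intro a ha b hb hab
  by_cases haA : a ∈ A
  · exact disjoint_left.1 hdisj haA (mem_nbrs.2 ⟨b, hb, hab⟩)
  by_cases hbA : b ∈ A
  · exact disjoint_left.1 hdisj hbA (mem_nbrs.2 ⟨a, ha, hab.symm⟩)
  have haB := (mem_sdiff.1 ((mem_union.1 ha).resolve_left haA)).1
  have hbB := (mem_sdiff.1 ((mem_union.1 hb).resolve_left hbA)).1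
  exact hB a haB b hbB hab

theorem IsCritIndep.diff_union_le_diff_union_sdiff_closedNbrs (hA : IsCritIndep G A) :
    diff G (A ∪ B) ≤ diff G (A ∪ (B \ closedNbrs G A)) := by
  set X := A ∪ (B \ closedNbrs G A)
  set D := B ∩ nbrs G A
  have hXD : A ∪ B = X ∪ D := by
    ext v
    simp only [X, D, closedNbrs, mem_union, mem_sdiff, mem_inter]
    tauto
  have hXD_disj : Disjoint X D := by
    refine disjoint_left.2 fun v hvX hvD => ?_
    have hvN := (mem_inter.1 hvD).2
    rcases mem_union.1 hvX with hvA | hvB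
    · exact disjoint_left.1 hA.1.disjoint_nbrs hvA hvN
    · exact (mem_sdiff.1 hvB).2 (mem_union_right _ hvN)
  have hAD : A ∩ nbrs G D ⊆ nbrs G D \ nbrs G X := fun v hv =>
    mem_sdiff.2 ⟨(mem_inter.1 hv).2,
      disjoint_left.1 hA.1.disjoint_nbrs_union_sdiff_closedNbrs (mem_inter.1 hv).1⟩
  have hD : #D ≤ #(nbrs G D \ nbrs G X) :=
    (hA.card_le_card_inter_nbrs inter_subset_right).trans (card_le_card hAD)
  have hcard : #(A ∪ B) = #X + #D := by
    rw [hXD, card_union_of_disjoint hXD_disj]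
  have hcardN : #(nbrs G (A ∪ B)) = #(nbrs G D \ nbrs G X) + #(nbrs G X) := by
    rw [hXD, nbrs_union, union_comm, card_sdiff_add_card]
  simp only [diff, hcard, hcardN]
  omega

theorem IsCritIndep.union_sdiff_closedNbrs (hA : IsCritIndep G A) (hB : IsCritIndep G B) :
    IsCritIndep G (A ∪ (B \ closedNbrs G A)) := by
  have hsuper := diff_add_diff_le_diff_union_add_diff_inter (G := G) A B
  have hinter := hB.2 (A ∩ B) (hA.1.mono inter_subset_left)
  have hunion := hA.diff_union_le_diff_union_sdiff_closedNbrs (B := B)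
  exact ⟨hA.1.union_sdiff_closedNbrs hB.1, fun I hI => by linarith [hA.2 I hI]⟩

theorem IsIndep.card_union_sdiff_closedNbrs (hA : IsIndep G A) :
    #(A ∪ (B \ closedNbrs G A)) + #(A ∩ B) + #(B ∩ nbrs G A) = #A + #B := by
  have hsplit : closedNbrs G A ∩ B = A ∩ B ∪ B ∩ nbrs G A := by
    rw [closedNbrs, union_inter_distrib_right, inter_comm (nbrs G A)]
  have hsplit_disj : Disjoint (A ∩ B) (B ∩ nbrs G A) :=
    disjoint_of_subset_left inter_subset_left
      (disjoint_of_subset_right inter_subset_right hA.disjoint_nbrs)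
  have hA_disj : Disjoint A (B \ closedNbrs G A) :=
    disjoint_sdiff.mono_left subset_union_left
  have hle := card_le_card (inter_subset_right : closedNbrs G A ∩ B ⊆ B)
  rw [card_union_of_disjoint hA_disj, card_sdiff]
  rw [hsplit, card_union_of_disjoint hsplit_disj] at hle ⊢
  omega

theorem IsCritIndep.card_inter_nbrs_le (hA : IsCritIndep G A) :
    #(B ∩ nbrs G A) ≤ #(A ∩ nbrs G B) :=
  (hA.card_le_card_inter_nbrs inter_subset_right).trans
    (card_le_card (inter_subset_inter_left (nbrs_mono inter_subset_left)))

theorem IsCritIndep.card_union_sdiff_closedNbrs_eq (hA : IsCritIndep G A)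
    (hB : IsCritIndep G B) :
    #(A ∪ (B \ closedNbrs G A)) = #(B ∪ (A \ closedNbrs G B)) := by
  have hA_card := hA.1.card_union_sdiff_closedNbrs (B := B)
  have hB_card := hB.1.card_union_sdiff_closedNbrs (B := A)
  have hAB := hA.card_inter_nbrs_le (B := B)
  have hBA := hB.card_inter_nbrs_le (B := A)
  rw [inter_comm B A] at hB_card
  omega

end CrownPaper

theorem crit_indep_augmentation (G : SimpleGraph V) [Fintype V] [DecidableEq V]
    [DecidableRel G.Adj] (A B : Finset V) (hA : IsCritIndep G A) (hB : IsCritIndep G B) :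
    IsCritIndep G (A ∪ (B \ closedNbrs G A)) ∧ IsCritIndep G (B ∪ (A \ closedNbrs G B)) ∧
    (A ∪ (B \ closedNbrs G A)).card = (B ∪ (A \ closedNbrs G B)).card :=
  ⟨hA.union_sdiff_closedNbrs hB, hB.union_sdiff_closedNbrs hA,
    hA.card_union_sdiff_closedNbrs_eq hB⟩
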